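/- Since the extremal asymptotically F_{3,2}-free construction is C_5-free, and π(F_{3,2}) = 4/9 with π(C_5, F_{3,2}) ≥ 4/9 witnessed by the same construction, one has π(C_5, F_{3,2}) = π(F_{3,2}). Concretely: the unbalanced bipartite construction (parts A, B with all edges having exactly two vertices in A and one in B) is simultaneously F_{3,2}-free and C_5-free. -/
import Mathlib


/-- `C₅`: the strong 5-cycle, the 3-graph on 5 vertices with edges
123, 234, 345, 451, 512. -/
def C5 : Finset (Finset (Fin 5)) := {{0,1,2},{1,2,3},{2,3,4},{3,4,0},{4,0,1}}

/-- `F₃,₂`: the 3-graph on 5 vertices with edges 123, 124, 125, 345. -/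
def F32 : Finset (Finset (Fin 5)) := {{0,1,2},{0,1,3},{0,1,4},{2,3,4}}

/-- `G` (a set of edges) contains a copy of `H` as a subgraph. -/
def HasCopy {k : ℕ} {V : Type*} [DecidableEq V]
    (H : Finset (Finset (Fin k))) (G : Set (Finset V)) : Prop :=
  ∃ f : Fin k → V, Function.Injective f ∧ ∀ e ∈ H, e.image f ∈ G

lemma filt {V : Type*} [DecidableEq V] (inA : V → Bool) (f : Fin 5 → V)
    (hf : Function.Injective f) (s : Finset (Fin 5)) :
    ((s.image f).filter (fun v => inA v = true)).card
      = (s.filter (fun i => inA (f i) = true)).card := by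
  rw [Finset.filter_image, Finset.card_image_of_injective _ hf]

/-- The unbalanced bipartite construction: vertices are split into a part `A`
(those `v` with `inA v = true`) and its complement `B`, and the edges are the
3-sets with exactly two vertices in `A` and one in `B`. This 3-graph is
simultaneously `C₅`-free and `F₃,₂`-free (which shows
`π(C₅, F₃,₂) = π(F₃,₂)`, the extremal `F₃,₂`-free construction being `C₅`-free). -/
theorem bipartite_construction_C5_and_F32_free
    {V : Type*} [DecidableEq V] (inA : V → Bool) :
    ¬ HasCopy C5 {e : Finset V | e.card = 3 ∧ (e.filter (fun v => inA v = true)).card = 2} ∧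
    ¬ HasCopy F32 {e : Finset V | e.card = 3 ∧ (e.filter (fun v => inA v = true)).card = 2} := by
  have key : ∀ H : Finset (Finset (Fin 5)),
      (∀ b : Fin 5 → Bool, ¬ ∀ e ∈ H, (e.filter (fun i => b i = true)).card = 2) →
      ¬ HasCopy H {e : Finset V | e.card = 3 ∧ (e.filter (fun v => inA v = true)).card = 2} := by
    rintro H hH ⟨f, hf, he⟩
    exact hH (fun i => inA (f i)) (fun e heH => by
      have := (he e heH).2
      rwa [filt inA f hf] at this)
  exact ⟨key C5 (by decide), key F32 (by decide)⟩
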